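/- arXiv:2102.02597 — 2 statements merged into one kernel-verified Lean document; each statement's English description precedes it below -/
import Mathlib

section
/- Let k be a positive integer, γ, δ ∈ [0,1] with γk, δk, γk/2, and (δ−γ/2)k integers. Let x, y ∈ F₂^k with wt(x+y) = γk. If z is drawn uniformly from F₂^k, then Pr[wt(x+z) = δk and wt(y+z) = δk] = (γk choose γk/2) · ((1−γ)k choose (δ−γ/2)k) · 2^(-k). -/
/-!
Translating by `x`, count the `w = x + z` with `wt w = m` and `wt (d + w) = m`, where `d = x + y`
has support `E` of size `g`. Over `𝔽₂` the support of `d + w` is the symmetric difference of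
the supports, so with `S` the support of `w` the two conditions read `#S = m` and
`#(E ∆ S) = m`; as `#E = g = 2 · gh` and `m = gh + s`, they are equivalent to
`#(S ∩ E) = gh` and `#(S \ E) = s`. Choosing `S ∩ E ⊆ E` and `S \ E ⊆ Eᶜ` independently gives
`(g choose gh) · (k - g choose s)` supports out of `2 ^ k`.
-/

open Finset
open scoped symmDiff

namespace Finset

variable {α : Type*} [DecidableEq α]

theorem card_eq_and_card_symmDiff_eq_iff {E S : Finset α} {a b : ℕ} (hE : #E = 2 * a) :
    #S = a + b ∧ #(E ∆ S) = a + b ↔ #(S ∩ E) = a ∧ #(S \ E) = b := by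
  have hS := card_sdiff_add_card_inter S E
  have hE' := card_sdiff_add_card_inter E S
  have hES : #(E ∆ S) = #(E \ S) + #(S \ E) :=
    card_union_of_disjoint disjoint_sdiff_sdiff
  rw [inter_comm] at hE'
  omega

theorem card_filter_card_inter_eq_and_card_sdiff_eq [Fintype α] (E : Finset α) (a b : ℕ) :
    #{S : Finset α | #(S ∩ E) = a ∧ #(S \ E) = b} = (#E).choose a * (#Eᶜ).choose b := by
  rw [← card_powersetCard, ← card_powersetCard, ← card_product]
  have split_union {A B : Finset α} (hA : A ⊆ E) (hB : B ⊆ Eᶜ) :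
      (A ∪ B) ∩ E = A ∧ (A ∪ B) \ E = B := by
    have hBE : ∀ i ∈ B, i ∉ E := fun i hi ↦ mem_compl.1 (hB hi)
    constructor <;> ext i <;> grind
  refine card_nbij' (fun S ↦ (S ∩ E, S \ E)) (fun p ↦ p.1 ∪ p.2) ?_ ?_ ?_ ?_
  · intro S hS
    simp only [coe_filter, Set.mem_ofPred_eq, mem_univ, true_and] at hS
    simp only [coe_product, Set.mem_prod, mem_coe, mem_powersetCard]
    exact ⟨⟨inter_subset_right, hS.1⟩, ⟨fun i hi ↦ mem_compl.2 (mem_sdiff.1 hi).2, hS.2⟩⟩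
  · rintro ⟨A, B⟩ hAB
    simp only [coe_product, Set.mem_prod, mem_coe, mem_powersetCard] at hAB
    obtain ⟨hA, hB⟩ := split_union hAB.1.1 hAB.2.1
    simp [hA, hB, hAB.1.2, hAB.2.2]
  · intro S _
    exact sup_inf_sdiff S E
  · rintro ⟨A, B⟩ hAB
    simp only [coe_product, Set.mem_prod, mem_coe, mem_powersetCard] at hAB
    obtain ⟨hA, hB⟩ := split_union hAB.1.1 hAB.2.1
    exact Prod.ext hA hB

end Finset

section ZModTwo

variable {ι : Type*} [Fintype ι] [DecidableEq ι]

def funZModTwoEquivFinset : (ι → ZMod 2) ≃ Finset ι where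
  toFun w := {i | w i ≠ 0}
  invFun S i := if i ∈ S then 1 else 0
  left_inv w := by
    funext i
    simp only [mem_filter, mem_univ, true_and]
    generalize w i = a
    revert a; decide
  right_inv S := by
    ext i
    by_cases h : i ∈ S <;> simp [h]

theorem card_funZModTwoEquivFinset (w : ι → ZMod 2) :
    #(funZModTwoEquivFinset w) = hammingNorm w := rfl

theorem funZModTwoEquivFinset_add (v w : ι → ZMod 2) :
    funZModTwoEquivFinset (v + w) = funZModTwoEquivFinset v ∆ funZModTwoEquivFinset w := by
  ext i
  simp only [funZModTwoEquivFinset, Equiv.coe_fn_mk, mem_symmDiff, mem_filter, mem_univ,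
    true_and, Pi.add_apply]
  generalize v i = a, w i = b
  revert a b; decide

end ZModTwo

theorem stmt_1_general (k : ℕ) (γ δ : ℝ)
    (g m gh s : ℕ) (hg : (g : ℝ) = γ * k) (hm : (m : ℝ) = δ * k)
    (hgh : (gh : ℝ) = γ * k / 2) (hs : (s : ℝ) = (δ - γ / 2) * k)
    (x y : Fin k → ZMod 2) (hxy : hammingNorm (x + y) = g) :
    ((Finset.univ.filter (fun z : Fin k → ZMod 2 =>
        hammingNorm (x + z) = m ∧ hammingNorm (y + z) = m)).card : ℝ) /
      (Fintype.card (Fin k → ZMod 2)) =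
    (g.choose gh : ℝ) * ((k - g).choose s : ℝ) * (1 / 2) ^ k := by
  have hg2 : g = 2 * gh := by exact_mod_cast (show (g : ℝ) = 2 * gh by rw [hg, hgh]; ring)
  have hms : m = gh + s := by exact_mod_cast (show (m : ℝ) = gh + s by rw [hm, hgh, hs]; ring)
  set E : Finset (Fin k) := funZModTwoEquivFinset (x + y)
  have hE : #E = g := hxy
  have hcount : #{z | hammingNorm (x + z) = m ∧ hammingNorm (y + z) = m} =
      #{S : Finset (Fin k) | #(S ∩ E) = gh ∧ #(S \ E) = s} := by
    refine card_equiv ((Equiv.addLeft x).trans funZModTwoEquivFinset) fun z ↦ ?_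
    have hyz : y + z = (x + y) + (x + z) := by
      funext i
      simp only [Pi.add_apply, add_add_add_comm, CharTwo.add_self_eq_zero, zero_add]
    simp only [mem_filter, mem_univ, true_and, Equiv.trans_apply, Equiv.coe_addLeft]
    rw [← card_eq_and_card_symmDiff_eq_iff (hE.trans hg2), ← hms, hyz,
      ← card_funZModTwoEquivFinset, ← card_funZModTwoEquivFinset,
      funZModTwoEquivFinset_add (x + y)]
  rw [hcount, card_filter_card_inter_eq_and_card_sdiff_eq, card_compl, hE, Fintype.card_fin,
    Fintype.card_fun, ZMod.card, Fintype.card_fin]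
  push_cast
  rw [div_eq_mul_inv, one_div, inv_pow]

theorem stmt_1 (k : ℕ) (hk : 0 < k) (γ δ : ℝ) (hγ0 : 0 ≤ γ) (hγ1 : γ ≤ 1)
    (hδ0 : 0 ≤ δ) (hδ1 : δ ≤ 1)
    (g m gh s : ℕ) (hg : (g : ℝ) = γ * k) (hm : (m : ℝ) = δ * k)
    (hgh : (gh : ℝ) = γ * k / 2) (hs : (s : ℝ) = (δ - γ / 2) * k)
    (x y : Fin k → ZMod 2) (hxy : hammingNorm (x + y) = g) :
    ((Finset.univ.filter (fun z : Fin k → ZMod 2 =>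
        hammingNorm (x + z) = m ∧ hammingNorm (y + z) = m)).card : ℝ) /
      (Fintype.card (Fin k → ZMod 2)) =
    (g.choose gh : ℝ) * ((k - g).choose s : ℝ) * (1 / 2) ^ k :=
  stmt_1_general k γ δ g m gh s hg hm hgh hs x y hxy
end

section
/- Let H(x) = −x log₂ x − (1−x) log₂(1−x) for x ∈ (0,1), with H(0)=H(1)=0. For γ ∈ (0, 1/2), the function ϑ*(δ) = 2(λ + H(δ) − 1) + (1−γ)(1 − H((δ − γ/2)/(1−γ))), defined for δ ∈ (γ/2, 1/2), attains its global minimum at δ_min = (1 − √(1−2γ))/2, with minimum value ϑ*(δ_min) = 2λ + H(γ) − 1. -/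
/-- Binary entropy function (base-2 logarithm), with `H 0 = H 1 = 0`. -/
noncomputable def binH (x : ℝ) : ℝ := -x * Real.logb 2 x - (1 - x) * Real.logb 2 (1 - x)

/-!
`ϑ*(δ) = 2 H(δ) - (1 - γ) H(ε(δ)) + const` with `ε(δ) = (δ - γ/2)/(1 - γ)`. Up to the factor `log 2`,
its derivative is `log ((1-δ)² (δ-γ/2)) - log (δ² (1-δ-γ/2))`, and the difference of the two
arguments factors as `(1 - 2δ)(δ(1-δ) - γ/2)`. On `(γ/2, 1/2)` it therefore changes sign exactly
once, from `-` to `+`, at the root `δ_min` of `δ(1-δ) = γ/2`.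

At `p = δ_min` we have `γ = 2p(1-p)` and `ε = p²/(p² + (1-p)²)`, and the value of `ϑ*` is the
grouping rule for entropy: a pair of independent `Bernoulli(p)` bits has entropy `2H(p)`, which
also equals the entropy `H(γ)` of the event that they differ, plus `γ` bits if they do, plus
`(1-γ) H(ε)` bits if they agree.
-/

open Real Set

lemma binH_eq_binEntropy_div_log_two (x : ℝ) : binH x = binEntropy x / log 2 := by
  simp only [binH, binEntropy, logb, log_inv]
  ring

lemma hasDerivAt_binH {x : ℝ} (h0 : x ≠ 0) (h1 : x ≠ 1) :
    HasDerivAt binH ((log (1 - x) - log x) / log 2) x := by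
  simpa only [← binH_eq_binEntropy_div_log_two] using
    (hasDerivAt_binEntropy h0 h1).div_const (log 2)

theorem two_mul_binH_eq {p : ℝ} (h0 : 0 < p) (h1 : p < 1) :
    2 * binH p = binH (2 * p * (1 - p)) + 2 * p * (1 - p) +
      (1 - 2 * p * (1 - p)) * binH (p ^ 2 / (1 - 2 * p * (1 - p))) := by
  have hq : 0 < 1 - p := by linarith
  have hr : 0 < 1 - 2 * p * (1 - p) := by nlinarith
  have hcompl : 1 - p ^ 2 / (1 - 2 * p * (1 - p)) = (1 - p) ^ 2 / (1 - 2 * p * (1 - p)) := by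
    rw [eq_div_iff hr.ne', sub_mul, div_mul_cancel₀ _ hr.ne']
    ring
  have hcompl' : 1 - 2 * p * (1 - p) = p ^ 2 + (1 - p) ^ 2 := by ring
  simp only [binH, hcompl]
  rw [logb_div (by positivity) hr.ne', logb_div (by positivity) hr.ne', logb_pow, logb_pow,
    logb_mul (by positivity) hq.ne', logb_mul two_ne_zero h0.ne', logb_self_eq_one one_lt_two]
  field_simp
  rw [hcompl']
  ring

lemma isMinOn_of_hasDerivAt_nonpos_nonneg {f f' : ℝ → ℝ} {a b c : ℝ} (hc : c ∈ Ioo a b)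
    (hf : ∀ x ∈ Ioo a b, HasDerivAt f (f' x) x)
    (hl : ∀ x ∈ Ioo a c, f' x ≤ 0) (hr : ∀ x ∈ Ioo c b, 0 ≤ f' x) :
    IsMinOn f (Ioo a b) c := by
  have hanti : AntitoneOn f (Ioc a c) :=
    antitoneOn_of_hasDerivWithinAt_nonpos (convex_Ioc a c)
      (fun x hx => (hf x ⟨hx.1, hx.2.trans_lt hc.2⟩).continuousAt.continuousWithinAt)
      (fun x hx => by
        rw [interior_Ioc] at hx ⊢
        exact (hf x ⟨hx.1, hx.2.trans hc.2⟩).hasDerivWithinAt)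
      (fun x hx => hl x (by rwa [interior_Ioc] at hx))
  have hmono : MonotoneOn f (Ico c b) :=
    monotoneOn_of_hasDerivWithinAt_nonneg (convex_Ico c b)
      (fun x hx => (hf x ⟨hc.1.trans_le hx.1, hx.2⟩).continuousAt.continuousWithinAt)
      (fun x hx => by
        rw [interior_Ico] at hx ⊢
        exact (hf x ⟨hc.1.trans hx.1, hx.2⟩).hasDerivWithinAt)
      (fun x hx => hr x (by rwa [interior_Ico] at hx))
  refine isMinOn_iff.2 fun x hx => ?_
  rcases le_total x c with h | h
  · exact hanti ⟨hx.1, h⟩ ⟨hc.1, le_rfl⟩ h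
  · exact hmono ⟨le_rfl, hc.2⟩ ⟨h, hx.2⟩ h

noncomputable def thetaStar (γ lam δ : ℝ) : ℝ :=
  2 * (lam + binH δ - 1) + (1 - γ) * (1 - binH ((δ - γ / 2) / (1 - γ)))

noncomputable def deltaMin (γ : ℝ) : ℝ := (1 - √(1 - 2 * γ)) / 2

section

variable {γ : ℝ}

lemma deltaMin_mul_one_sub (hγ : γ ≤ 1 / 2) : deltaMin γ * (1 - deltaMin γ) = γ / 2 := by
  have hs := sq_sqrt (show 0 ≤ 1 - 2 * γ by linarith)
  unfold deltaMin
  linear_combination (-1 / 4 : ℝ) * hs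

lemma deltaMin_mem_Ioo (hγ0 : 0 < γ) (hγ1 : γ < 1 / 2) : deltaMin γ ∈ Ioo (γ / 2) (1 / 2) := by
  have hs := sq_sqrt (show 0 ≤ 1 - 2 * γ by linarith)
  have hs0 : 0 < √(1 - 2 * γ) := sqrt_pos.2 (by linarith)
  unfold deltaMin
  constructor <;> nlinarith

lemma hasDerivAt_thetaStar {lam δ : ℝ} (hγ : 0 ≤ γ) (hδ : δ ∈ Ioo (γ / 2) (1 - γ / 2)) :
    HasDerivAt (thetaStar γ lam)
      ((log ((1 - δ) ^ 2 * (δ - γ / 2)) - log (δ ^ 2 * (1 - δ - γ / 2))) / log 2) δ := by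
  obtain ⟨hδ0, hδ1⟩ := hδ
  have hγ1 : 0 < 1 - γ := by linarith
  have hε0 : 0 < (δ - γ / 2) / (1 - γ) := div_pos (by linarith) hγ1
  have hε1 : (δ - γ / 2) / (1 - γ) < 1 := (div_lt_one hγ1).2 (by linarith)
  have hinner : HasDerivAt (fun x => (x - γ / 2) / (1 - γ)) (1 / (1 - γ)) δ := by
    simpa using ((hasDerivAt_id δ).sub_const (γ / 2)).div_const (1 - γ)
  have h := ((((hasDerivAt_binH (by linarith) (by linarith)).const_add lam).sub_const 1).const_mul 2
    |>.add ((((hasDerivAt_binH hε0.ne' hε1.ne).comp δ hinner).const_sub 1).const_mul (1 - γ)))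
  refine h.congr_deriv ?_
  have hcompl : 1 - (δ - γ / 2) / (1 - γ) = (1 - δ - γ / 2) / (1 - γ) := by
    field_simp
    ring
  rw [hcompl, log_div (by linarith) hγ1.ne', log_div (by linarith) hγ1.ne',
    log_mul (pow_pos (by linarith) 2).ne' (by linarith),
    log_mul (pow_pos (by linarith) 2).ne' (by linarith), log_pow, log_pow]
  field_simp
  ring

lemma isMinOn_thetaStar (lam : ℝ) (hγ0 : 0 < γ) (hγ1 : γ < 1 / 2) :
    IsMinOn (thetaStar γ lam) (Ioo (γ / 2) (1 / 2)) (deltaMin γ) := by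
  set c := deltaMin γ
  have hc : c ∈ Ioo (γ / 2) (1 / 2) := deltaMin_mem_Ioo hγ0 hγ1
  have hcc : c * (1 - c) = γ / 2 := deltaMin_mul_one_sub hγ1.le
  have hfactor : ∀ x : ℝ, (1 - x) ^ 2 * (x - γ / 2) - x ^ 2 * (1 - x - γ / 2) =
      (1 - 2 * x) * (x - c) * (1 - x - c) := fun x => by
    linear_combination (1 - 2 * x) * hcc
  refine isMinOn_of_hasDerivAt_nonpos_nonneg hc
    (fun x hx => hasDerivAt_thetaStar hγ0.le ⟨hx.1, by linarith [hx.2]⟩) ?_ ?_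
  · rintro x ⟨hx0, hxc⟩
    have hneg : (1 - 2 * x) * (x - c) * (1 - x - c) ≤ 0 :=
      mul_nonpos_of_nonpos_of_nonneg
        (mul_nonpos_of_nonneg_of_nonpos (by linarith [hc.2]) (by linarith)) (by linarith [hc.2])
    refine div_nonpos_of_nonpos_of_nonneg (sub_nonpos.2 (log_le_log ?_ ?_)) (log_nonneg one_le_two)
    · exact mul_pos (pow_pos (by linarith [hc.2]) 2) (by linarith)
    · linarith [hfactor x]
  · rintro x ⟨hcx, hx1⟩
    have hpos : 0 ≤ (1 - 2 * x) * (x - c) * (1 - x - c) :=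
      mul_nonneg (mul_nonneg (by linarith) (by linarith)) (by linarith)
    refine div_nonneg (sub_nonneg.2 (log_le_log ?_ ?_)) (log_nonneg one_le_two)
    · exact mul_pos (pow_pos (by linarith [hc.1]) 2) (by linarith)
    · linarith [hfactor x]

lemma thetaStar_deltaMin (lam : ℝ) (hγ0 : 0 < γ) (hγ1 : γ < 1 / 2) :
    thetaStar γ lam (deltaMin γ) = 2 * lam + binH γ - 1 := by
  set p := deltaMin γ
  have hp : p ∈ Ioo (γ / 2) (1 / 2) := deltaMin_mem_Ioo hγ0 hγ1
  have hpp : p * (1 - p) = γ / 2 := deltaMin_mul_one_sub hγ1.le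
  have hgroup := two_mul_binH_eq (by linarith [hp.1]) (by linarith [hp.2])
  rw [show 2 * p * (1 - p) = γ by linarith] at hgroup
  have hε : p - γ / 2 = p ^ 2 := by linear_combination hpp
  unfold thetaStar
  rw [hε]
  linear_combination hgroup

end

theorem stmt_12_general (γ lam : ℝ) (hγ0 : 0 < γ) (hγ1 : γ < 1 / 2) :
    (1 - Real.sqrt (1 - 2 * γ)) / 2 ∈ Set.Ioo (γ / 2) (1 / 2) ∧
    (∀ δ ∈ Set.Ioo (γ / 2) (1 / 2 : ℝ),
      2 * (lam + binH ((1 - Real.sqrt (1 - 2 * γ)) / 2) - 1) +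
        (1 - γ) * (1 - binH (((1 - Real.sqrt (1 - 2 * γ)) / 2 - γ / 2) / (1 - γ))) ≤
      2 * (lam + binH δ - 1) + (1 - γ) * (1 - binH ((δ - γ / 2) / (1 - γ)))) ∧
    2 * (lam + binH ((1 - Real.sqrt (1 - 2 * γ)) / 2) - 1) +
        (1 - γ) * (1 - binH (((1 - Real.sqrt (1 - 2 * γ)) / 2 - γ / 2) / (1 - γ))) =
      2 * lam + binH γ - 1 :=
  ⟨deltaMin_mem_Ioo hγ0 hγ1, isMinOn_iff.1 (isMinOn_thetaStar lam hγ0 hγ1),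
    thetaStar_deltaMin lam hγ0 hγ1⟩

theorem stmt_12 (γ lam : ℝ) (hγ0 : 0 < γ) (hγ1 : γ < 1 / 2) (hl0 : 0 ≤ lam) (hl1 : lam ≤ 1) :
    (1 - Real.sqrt (1 - 2 * γ)) / 2 ∈ Set.Ioo (γ / 2) (1 / 2) ∧
    (∀ δ ∈ Set.Ioo (γ / 2) (1 / 2 : ℝ),
      2 * (lam + binH ((1 - Real.sqrt (1 - 2 * γ)) / 2) - 1) +
        (1 - γ) * (1 - binH (((1 - Real.sqrt (1 - 2 * γ)) / 2 - γ / 2) / (1 - γ))) ≤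
      2 * (lam + binH δ - 1) + (1 - γ) * (1 - binH ((δ - γ / 2) / (1 - γ)))) ∧
    2 * (lam + binH ((1 - Real.sqrt (1 - 2 * γ)) / 2) - 1) +
        (1 - γ) * (1 - binH (((1 - Real.sqrt (1 - 2 * γ)) / 2 - γ / 2) / (1 - γ))) =
      2 * lam + binH γ - 1 :=
  stmt_12_general γ lam hγ0 hγ1
end
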